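/- Let f : ℝ^d → ℝ be convex and L-smooth (differentiable with L-Lipschitz gradient, L > 0), bounded below with f* := inf f. Let E be a positive integer, w_0 ∈ ℝ^d, and define gradient-descent iterates w_{τ+1} = w_τ − η ∇f(w_τ) with step size 0 < η ≤ 1/(2L). Let u := Σ_{τ=0}^{E−1} ∇f(w_τ). Fix w* ∈ ℝ^d, set Δ := f(w*) − f*, and let Ĉ ≥ 4√(L Δ). Define the clipped update g := u·min(1, Ĉ·E/‖u‖) and A := −2η⟨g, w_0 − w*⟩ + η²‖g‖². Then: if ‖u‖ ≤ Ĉ·E, A ≤ −ηE{(2 − 2ηLE − 4η²L²E²)(f(w_0) − f(w*)) − (2ηLE + 4η²L²E²)Δ}; and if ‖u‖ > Ĉ·E, A ≤ −ηE·(3Ĉ/(8LE))·‖u‖. -/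

import Mathlib

/-!
Since η ≤ 1/(2L), gradient descent decreases f, so along the trajectory every gradient obeys
‖∇f(w_τ)‖² ≤ 2L(f(w₀) − f*), and w₀ − w_τ = η ∑_{s<τ} ∇f(w_s) has norm at most ητ√(2L(f(w₀) − f*)).

Without clipping, convexity at w_τ towards w* and the descent lemma at w_τ towards w₀ give
⟨∇f(w_τ), w₀ − w*⟩ ≥ f(w₀) − f(w*) − (L/2)‖w₀ − w_τ‖²; summing over τ < E bounds A.

With clipping, ∑_τ ⟨∇f(w_τ), w₀ − w_τ⟩ = η(‖u‖² − ∑_τ ‖∇f(w_τ)‖²)/2 exactly, while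
⟨∇f(w_τ), w_τ − w*⟩ ≥ ‖∇f(w_τ)‖²/(2L) − Δ. With Cauchy–Schwarz this yields
⟨u, w₀ − w*⟩ ≥ ‖u‖²/(4LE) + η‖u‖²/2 − EΔ, and the threshold Ĉ ≥ 4√(LΔ) forces
EΔ ≤ ‖u‖²/(16LE), so the Δ term costs only a quarter of the main term.
-/

open scoped RealInnerProductSpace Gradient

section Smooth

variable {F : Type*} [NormedAddCommGroup F] [InnerProductSpace ℝ F] [CompleteSpace F]
  {f : F → ℝ} {L : ℝ}

theorem DifferentiableAt.hasDerivAt_comp_add_smul {x v : F} {t : ℝ}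
    (hf : DifferentiableAt ℝ f (x + t • v)) :
    HasDerivAt (fun s : ℝ => f (x + s • v)) ⟪∇ f (x + t • v), v⟫ t := by
  have hline : HasDerivAt (fun s : ℝ => x + s • v) v t := by
    simpa using ((hasDerivAt_id t).smul_const v).const_add x
  have h := hf.hasGradientAt.hasFDerivAt.comp_hasDerivAt t hline
  simp only [InnerProductSpace.toDual_apply_apply] at h
  exact h

theorem apply_le_add_inner_gradient_add_sq (hf : Differentiable ℝ f)
    (hlip : ∀ x y, ‖∇ f x - ∇ f y‖ ≤ L * ‖x - y‖) (x y : F) :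
    f y ≤ f x + ⟪∇ f x, y - x⟫ + L / 2 * ‖y - x‖ ^ 2 := by
  set v := y - x
  let φ : ℝ → ℝ := fun t => f (x + t • v) - t * ⟪∇ f x, v⟫ - L / 2 * t ^ 2 * ‖v‖ ^ 2
  have hφ : ∀ t, HasDerivAt φ (⟪∇ f (x + t • v) - ∇ f x, v⟫ - L * t * ‖v‖ ^ 2) t := by
    intro t
    have h := ((hf (x + t • v)).hasDerivAt_comp_add_smul.sub
      ((hasDerivAt_id t).mul_const ⟪∇ f x, v⟫)).sub
      (((hasDerivAt_pow 2 t).const_mul (L / 2)).mul_const (‖v‖ ^ 2))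
    refine h.congr_deriv ?_
    simp only [inner_sub_left, one_mul, Nat.cast_ofNat, Nat.add_one_sub_one, pow_one]
    ring
  have hanti : AntitoneOn φ (Set.Icc 0 1) := by
    refine antitoneOn_of_deriv_nonpos (convex_Icc 0 1)
      (fun t _ => (hφ t).continuousAt.continuousWithinAt)
      (fun t _ => (hφ t).differentiableAt.differentiableWithinAt) fun t ht => ?_
    rw [interior_Icc] at ht
    have hlipt : ‖∇ f (x + t • v) - ∇ f x‖ ≤ L * t * ‖v‖ := by
      simpa [norm_smul, abs_of_pos ht.1, mul_assoc] using hlip (x + t • v) x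
    rw [(hφ t).deriv, sub_nonpos]
    calc ⟪∇ f (x + t • v) - ∇ f x, v⟫ ≤ ‖∇ f (x + t • v) - ∇ f x‖ * ‖v‖ := real_inner_le_norm _ _
      _ ≤ L * t * ‖v‖ * ‖v‖ := by gcongr
      _ = L * t * ‖v‖ ^ 2 := by ring
  have h01 := hanti (Set.left_mem_Icc.2 zero_le_one) (Set.right_mem_Icc.2 zero_le_one) zero_le_one
  have e0 : φ 0 = f x := by simp [φ]
  have e1 : φ 1 = f y - ⟪∇ f x, v⟫ - L / 2 * ‖v‖ ^ 2 := by
    simp only [φ, v, one_smul, add_sub_cancel, one_mul, one_pow, mul_one]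
  rw [e0, e1] at h01
  linarith

theorem ConvexOn.add_inner_gradient_le (hconv : ConvexOn ℝ Set.univ f) {x : F}
    (hf : DifferentiableAt ℝ f x) (y : F) : f x + ⟪∇ f x, y - x⟫ ≤ f y := by
  have hline : ConvexOn ℝ Set.univ (fun t : ℝ => f (x + t • (y - x))) := by
    have h := hconv.comp_affineMap (AffineMap.lineMap x y)
    have hcomp : f ∘ AffineMap.lineMap x y = fun t : ℝ => f (x + t • (y - x)) := by
      funext t
      simp [AffineMap.lineMap_apply, add_comm]
    rw [hcomp] at h
    simpa using h
  have hx : DifferentiableAt ℝ f (x + (0 : ℝ) • (y - x)) := by rwa [zero_smul, add_zero]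
  have hder : HasDerivAt (fun t : ℝ => f (x + t • (y - x))) ⟪∇ f x, y - x⟫ 0 := by
    simpa using hx.hasDerivAt_comp_add_smul
  have h := hline.le_slope_of_hasDerivAt (Set.mem_univ 0) (Set.mem_univ 1) one_pos hder
  simp only [slope_def_field, zero_smul, add_zero, one_smul, add_sub_cancel, sub_zero,
    div_one] at h
  linarith

theorem apply_sub_smul_gradient_le (hf : Differentiable ℝ f)
    (hlip : ∀ x y, ‖∇ f x - ∇ f y‖ ≤ L * ‖x - y‖) (x : F) (η : ℝ) :
    f (x - η • ∇ f x) ≤ f x - η * (1 - L * η / 2) * ‖∇ f x‖ ^ 2 := by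
  have h := apply_le_add_inner_gradient_add_sq hf hlip x (x - η • ∇ f x)
  rw [sub_sub_cancel_left, norm_neg, norm_smul, inner_neg_right, real_inner_smul_right,
    real_inner_self_eq_norm_sq, Real.norm_eq_abs, mul_pow, sq_abs] at h
  linarith

theorem norm_gradient_sq_le (hL : 0 < L) (hf : Differentiable ℝ f)
    (hlip : ∀ x y, ‖∇ f x - ∇ f y‖ ≤ L * ‖x - y‖) {m : ℝ} (hm : ∀ z, m ≤ f z) (x : F) :
    ‖∇ f x‖ ^ 2 ≤ 2 * L * (f x - m) := by
  have hstep := apply_sub_smul_gradient_le hf hlip x L⁻¹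
  have hcoef : L⁻¹ * (1 - L * L⁻¹ / 2) = (2 * L)⁻¹ := by field_simp; ring
  rw [hcoef] at hstep
  rw [← inv_mul_le_iff₀ (by positivity)]
  linarith [hm (x - L⁻¹ • ∇ f x)]

theorem ConvexOn.sub_le_inner_gradient_add_sq (hconv : ConvexOn ℝ Set.univ f)
    (hf : Differentiable ℝ f) (hlip : ∀ x y, ‖∇ f x - ∇ f y‖ ≤ L * ‖x - y‖) (x y z : F) :
    f y - f z ≤ ⟪∇ f x, y - z⟫ + L / 2 * ‖y - x‖ ^ 2 := by
  have hz := hconv.add_inner_gradient_le (hf x) z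
  have hy := apply_le_add_inner_gradient_add_sq hf hlip x y
  have hsplit : ⟪∇ f x, y - z⟫ = ⟪∇ f x, y - x⟫ - ⟪∇ f x, z - x⟫ := by
    rw [← inner_sub_right, sub_sub_sub_cancel_right]
  linarith

end Smooth

theorem norm_sum_sq_le_card_mul {ι E : Type*} [SeminormedAddCommGroup E] (s : Finset ι)
    (v : ι → E) : ‖∑ i ∈ s, v i‖ ^ 2 ≤ s.card * ∑ i ∈ s, ‖v i‖ ^ 2 :=
  (pow_le_pow_left₀ (norm_nonneg _) (norm_sum_le s v) 2).trans (sq_sum_le_card_mul_sum_sq ..)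

theorem sum_range_inner_sum_range {F : Type*} [NormedAddCommGroup F] [InnerProductSpace ℝ F]
    (v : ℕ → F) (n : ℕ) :
    ∑ τ ∈ Finset.range n, ⟪v τ, ∑ s ∈ Finset.range τ, v s⟫
      = (‖∑ τ ∈ Finset.range n, v τ‖ ^ 2 - ∑ τ ∈ Finset.range n, ‖v τ‖ ^ 2) / 2 := by
  induction n with
  | zero => simp
  | succ n ih =>
    simp only [Finset.sum_range_succ, ih, norm_add_sq_real, real_inner_comm (v n)]
    ring

section Clip

variable {F : Type*} [NormedAddCommGroup F] [InnerProductSpace ℝ F]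

noncomputable def clip (z : F) (C : ℝ) : F := min 1 (C / ‖z‖) • z

theorem clip_of_norm_le {z : F} {C : ℝ} (h : ‖z‖ ≤ C) : clip z C = z := by
  rcases eq_or_ne z 0 with rfl | hz
  · rw [clip, smul_zero]
  · rw [clip, min_eq_left ((one_le_div (norm_pos_iff.2 hz)).2 h), one_smul]

theorem clip_of_lt_norm {z : F} {C : ℝ} (h : C < ‖z‖) : clip z C = (C / ‖z‖) • z := by
  rcases eq_or_ne z 0 with rfl | hz
  · rw [clip, smul_zero, smul_zero]
  · rw [clip, min_eq_right ((div_lt_one (norm_pos_iff.2 hz)).2 h).le]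

theorem neg_two_mul_inner_smul_add_sq_le {u v : F} {η c : ℝ} (hc0 : 0 ≤ c) (hc1 : c ≤ 1) :
    -2 * η * ⟪c • u, v⟫ + η ^ 2 * ‖c • u‖ ^ 2 ≤ -2 * η * c * (⟪u, v⟫ - η / 2 * ‖u‖ ^ 2) := by
  rw [real_inner_smul_left, norm_smul, Real.norm_eq_abs, abs_of_nonneg hc0]
  nlinarith [mul_nonneg (mul_nonneg (sq_nonneg η) (sq_nonneg ‖u‖))
    (mul_nonneg hc0 (sub_nonneg.2 hc1))]

end Clip

section GradientDescent

variable {F : Type*} [NormedAddCommGroup F] [InnerProductSpace ℝ F] [CompleteSpace F]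
  {f : F → ℝ} {L η m : ℝ} {w : ℕ → F}

theorem sub_eq_smul_sum_gradient (hw : ∀ τ, w (τ + 1) = w τ - η • ∇ f (w τ)) (τ : ℕ) :
    w 0 - w τ = η • ∑ s ∈ Finset.range τ, ∇ f (w s) := by
  induction τ with
  | zero => simp
  | succ τ ih => rw [Finset.sum_range_succ, smul_add, ← ih, hw]; abel

theorem antitone_comp_of_gradient_step (hf : Differentiable ℝ f)
    (hlip : ∀ x y, ‖∇ f x - ∇ f y‖ ≤ L * ‖x - y‖) (hη0 : 0 ≤ η) (hηL : η * L ≤ 2)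
    (hw : ∀ τ, w (τ + 1) = w τ - η • ∇ f (w τ)) : Antitone (f ∘ w) := by
  refine antitone_nat_of_succ_le fun τ => ?_
  have hdesc := apply_sub_smul_gradient_le hf hlip (w τ) η
  have hpos : 0 ≤ η * (1 - L * η / 2) * ‖∇ f (w τ)‖ ^ 2 :=
    mul_nonneg (mul_nonneg hη0 (by linarith)) (sq_nonneg _)
  simp only [Function.comp, hw]
  linarith

theorem norm_sum_gradient_iterate_sq_le (hL : 0 < L) (hf : Differentiable ℝ f)
    (hlip : ∀ x y, ‖∇ f x - ∇ f y‖ ≤ L * ‖x - y‖) (hm : ∀ z, m ≤ f z) (hη0 : 0 ≤ η)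
    (hηL : η * L ≤ 2) (hw : ∀ τ, w (τ + 1) = w τ - η • ∇ f (w τ)) (n : ℕ) :
    ‖∑ τ ∈ Finset.range n, ∇ f (w τ)‖ ^ 2 ≤ n ^ 2 * (2 * L * (f (w 0) - m)) := by
  have hgrad : ∀ τ, ‖∇ f (w τ)‖ ^ 2 ≤ 2 * L * (f (w 0) - m) := fun τ =>
    (norm_gradient_sq_le hL hf hlip hm (w τ)).trans <| by
      gcongr
      exact antitone_comp_of_gradient_step hf hlip hη0 hηL hw (Nat.zero_le τ)
  calc ‖∑ τ ∈ Finset.range n, ∇ f (w τ)‖ ^ 2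
      ≤ n * ∑ τ ∈ Finset.range n, ‖∇ f (w τ)‖ ^ 2 := by
        simpa using norm_sum_sq_le_card_mul (Finset.range n) (fun τ => ∇ f (w τ))
    _ ≤ n * (n * (2 * L * (f (w 0) - m))) := by
        gcongr
        simpa using Finset.sum_le_card_nsmul (Finset.range n) _ _ fun τ _ => hgrad τ
    _ = n ^ 2 * (2 * L * (f (w 0) - m)) := by ring

theorem sub_le_inner_sum_gradient_iterate (hL : 0 < L) (hconv : ConvexOn ℝ Set.univ f)
    (hf : Differentiable ℝ f) (hlip : ∀ x y, ‖∇ f x - ∇ f y‖ ≤ L * ‖x - y‖) (hm : ∀ z, m ≤ f z)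
    (hη0 : 0 ≤ η) (hηL : η * L ≤ 2) (hw : ∀ τ, w (τ + 1) = w τ - η • ∇ f (w τ)) (n : ℕ) (z : F) :
    n * (f (w 0) - f z) - η ^ 2 * L ^ 2 * n ^ 3 * (f (w 0) - m)
      ≤ ⟪∑ τ ∈ Finset.range n, ∇ f (w τ), w 0 - z⟫ := by
  have hm0 : 0 ≤ f (w 0) - m := sub_nonneg.2 (hm _)
  have hdist : ∀ τ ≤ n, ‖w 0 - w τ‖ ^ 2 ≤ η ^ 2 * n ^ 2 * (2 * L * (f (w 0) - m)) := by
    intro τ hτ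
    rw [sub_eq_smul_sum_gradient hw, norm_smul, mul_pow, Real.norm_eq_abs, sq_abs, mul_assoc]
    gcongr
    exact (norm_sum_gradient_iterate_sq_le hL hf hlip hm hη0 hηL hw τ).trans (by gcongr)
  have hterm : ∀ τ ∈ Finset.range n, f (w 0) - f z - η ^ 2 * L ^ 2 * n ^ 2 * (f (w 0) - m)
      ≤ ⟪∇ f (w τ), w 0 - z⟫ := by
    intro τ hτ
    have h3 := hconv.sub_le_inner_gradient_add_sq hf hlip (w τ) (w 0) z
    have hd := mul_le_mul_of_nonneg_left (hdist τ (Finset.mem_range.1 hτ).le)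
      (by positivity : 0 ≤ L / 2)
    linarith
  calc n * (f (w 0) - f z) - η ^ 2 * L ^ 2 * n ^ 3 * (f (w 0) - m)
      = ∑ τ ∈ Finset.range n, (f (w 0) - f z - η ^ 2 * L ^ 2 * n ^ 2 * (f (w 0) - m)) := by
        simp only [Finset.sum_const, Finset.card_range, nsmul_eq_mul]; ring
    _ ≤ ⟪∑ τ ∈ Finset.range n, ∇ f (w τ), w 0 - z⟫ := by
        rw [sum_inner]; exact Finset.sum_le_sum hterm

theorem sq_div_le_inner_sum_gradient_iterate (hL : 0 < L) (hconv : ConvexOn ℝ Set.univ f)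
    (hf : Differentiable ℝ f) (hlip : ∀ x y, ‖∇ f x - ∇ f y‖ ≤ L * ‖x - y‖) (hm : ∀ z, m ≤ f z)
    (hη : η ≤ 1 / (2 * L)) (hw : ∀ τ, w (τ + 1) = w τ - η • ∇ f (w τ)) {n : ℕ} (hn : 0 < n)
    (z : F) :
    ‖∑ τ ∈ Finset.range n, ∇ f (w τ)‖ ^ 2 / (4 * L * n)
        + η / 2 * ‖∑ τ ∈ Finset.range n, ∇ f (w τ)‖ ^ 2 - n * (f z - m)
      ≤ ⟪∑ τ ∈ Finset.range n, ∇ f (w τ), w 0 - z⟫ := by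
  set G := ∑ τ ∈ Finset.range n, ∇ f (w τ)
  set S := ∑ τ ∈ Finset.range n, ‖∇ f (w τ)‖ ^ 2
  have hsplit : ⟪G, w 0 - z⟫ = ∑ τ ∈ Finset.range n, ⟪∇ f (w τ), w 0 - w τ⟫
      + ∑ τ ∈ Finset.range n, ⟪∇ f (w τ), w τ - z⟫ := by
    rw [sum_inner, ← Finset.sum_add_distrib]
    simp only [← inner_add_right, sub_add_sub_cancel]
  have hdrift : ∑ τ ∈ Finset.range n, ⟪∇ f (w τ), w 0 - w τ⟫ = η * ((‖G‖ ^ 2 - S) / 2) := by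
    simp only [sub_eq_smul_sum_gradient hw, real_inner_smul_right, ← Finset.mul_sum,
      sum_range_inner_sum_range, G, S]
  have hterm : ∀ τ ∈ Finset.range n, ‖∇ f (w τ)‖ ^ 2 / (2 * L) - (f z - m)
      ≤ ⟪∇ f (w τ), w τ - z⟫ := by
    intro τ _
    have hc := hconv.add_inner_gradient_le (hf (w τ)) z
    have hg : ‖∇ f (w τ)‖ ^ 2 / (2 * L) ≤ f (w τ) - m := by
      rw [div_le_iff₀ (by positivity), mul_comm]
      exact norm_gradient_sq_le hL hf hlip hm (w τ)
    rw [← neg_sub z, inner_neg_right]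
    linarith
  have hgap : S / (2 * L) - n * (f z - m) ≤ ∑ τ ∈ Finset.range n, ⟪∇ f (w τ), w τ - z⟫ := by
    refine le_of_eq_of_le ?_ (Finset.sum_le_sum hterm)
    rw [Finset.sum_sub_distrib, ← Finset.sum_div, Finset.sum_const, Finset.card_range,
      nsmul_eq_mul]
  have hCS : ‖G‖ ^ 2 ≤ n * S := by simpa using norm_sum_sq_le_card_mul (Finset.range n) _
  have hS : ‖G‖ ^ 2 / (4 * L * n) ≤ S * (1 / (2 * L) - η / 2) := by
    have hn' : (0 : ℝ) < n := by exact_mod_cast hn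
    have hS0 : 0 ≤ S := Finset.sum_nonneg fun τ _ => sq_nonneg _
    calc ‖G‖ ^ 2 / (4 * L * n) ≤ S * (1 / (4 * L)) := by
          rw [div_le_iff₀ (by positivity)]
          calc ‖G‖ ^ 2 ≤ n * S := hCS
            _ = S * (1 / (4 * L)) * (4 * L * n) := by field_simp
      _ ≤ S * (1 / (2 * L) - η / 2) := by
          gcongr
          have : 1 / (2 * L) = 2 * (1 / (4 * L)) := by field_simp; norm_num
          linarith
  rw [hsplit, hdrift]
  linear_combination hgap + hS

theorem neg_two_mul_inner_sum_gradient_iterate_add_sq_le (hL : 0 < L)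
    (hconv : ConvexOn ℝ Set.univ f) (hf : Differentiable ℝ f)
    (hlip : ∀ x y, ‖∇ f x - ∇ f y‖ ≤ L * ‖x - y‖) (hm : ∀ z, m ≤ f z) (hη0 : 0 ≤ η)
    (hηL : η * L ≤ 2) (hw : ∀ τ, w (τ + 1) = w τ - η • ∇ f (w τ)) (n : ℕ) (z : F) :
    -2 * η * ⟪∑ τ ∈ Finset.range n, ∇ f (w τ), w 0 - z⟫
        + η ^ 2 * ‖∑ τ ∈ Finset.range n, ∇ f (w τ)‖ ^ 2
      ≤ -(η * n) * ((2 - 2 * η * L * n - 4 * η ^ 2 * L ^ 2 * n ^ 2) * (f (w 0) - f z)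
          - (2 * η * L * n + 4 * η ^ 2 * L ^ 2 * n ^ 2) * (f z - m)) := by
  have hinner := sub_le_inner_sum_gradient_iterate hL hconv hf hlip hm hη0 hηL hw n z
  have hnorm := norm_sum_gradient_iterate_sq_le hL hf hlip hm hη0 hηL hw n
  have hpos : 0 ≤ η ^ 3 * L ^ 2 * n ^ 3 * (f (w 0) - m) :=
    mul_nonneg (by positivity) (sub_nonneg.2 (hm (w 0)))
  nlinarith [mul_le_mul_of_nonneg_left hinner (by positivity : (0 : ℝ) ≤ 2 * η),
    mul_le_mul_of_nonneg_left hnorm (by positivity : (0 : ℝ) ≤ η ^ 2)]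

theorem neg_two_mul_inner_clip_sum_gradient_iterate_add_sq_le (hL : 0 < L)
    (hconv : ConvexOn ℝ Set.univ f) (hf : Differentiable ℝ f)
    (hlip : ∀ x y, ‖∇ f x - ∇ f y‖ ≤ L * ‖x - y‖) (hm : ∀ z, m ≤ f z) (hη0 : 0 ≤ η)
    (hη : η ≤ 1 / (2 * L)) (hw : ∀ τ, w (τ + 1) = w τ - η • ∇ f (w τ)) {n : ℕ} (hn : 0 < n)
    {z : F} {C : ℝ} (hC : 4 * √(L * (f z - m)) ≤ C)
    (hclip : C * n < ‖∑ τ ∈ Finset.range n, ∇ f (w τ)‖) :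
    -2 * η * ⟪clip (∑ τ ∈ Finset.range n, ∇ f (w τ)) (C * n), w 0 - z⟫
        + η ^ 2 * ‖clip (∑ τ ∈ Finset.range n, ∇ f (w τ)) (C * n)‖ ^ 2
      ≤ -(η * n) * (3 * C / (8 * L * n)) * ‖∑ τ ∈ Finset.range n, ∇ f (w τ)‖ := by
  set G := ∑ τ ∈ Finset.range n, ∇ f (w τ)
  have hn' : (0 : ℝ) < n := Nat.cast_pos.2 hn
  have hC0 : 0 ≤ C := le_trans (by positivity) hC
  have hG0 : 0 < ‖G‖ := lt_of_le_of_lt (by positivity) hclip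
  have hgap : n * (f z - m) ≤ ‖G‖ ^ 2 / (16 * L * n) := by
    have h4 : 4 * √(L * (f z - m)) * n ≤ ‖G‖ :=
      (mul_le_mul_of_nonneg_right hC hn'.le).trans hclip.le
    have h5 := pow_le_pow_left₀ (by positivity) h4 2
    rw [mul_pow, mul_pow, Real.sq_sqrt (mul_nonneg hL.le (sub_nonneg.2 (hm z)))] at h5
    rw [le_div_iff₀ (by positivity)]
    linarith
  have hinner := sq_div_le_inner_sum_gradient_iterate hL hconv hf hlip hm hη hw hn z
  rw [clip_of_lt_norm hclip]
  have hc0 : 0 ≤ C * n / ‖G‖ := by positivity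
  calc -2 * η * ⟪(C * n / ‖G‖) • G, w 0 - z⟫ + η ^ 2 * ‖(C * n / ‖G‖) • G‖ ^ 2
      ≤ -2 * η * (C * n / ‖G‖) * (⟪G, w 0 - z⟫ - η / 2 * ‖G‖ ^ 2) :=
        neg_two_mul_inner_smul_add_sq_le hc0 ((div_lt_one hG0).2 hclip).le
    _ ≤ -2 * η * (C * n / ‖G‖) * (3 * (‖G‖ ^ 2 / (16 * L * n))) := by
        rw [neg_mul, neg_mul, neg_mul, neg_mul, neg_le_neg_iff]
        gcongr
        have : ‖G‖ ^ 2 / (4 * L * n) = 4 * (‖G‖ ^ 2 / (16 * L * n)) := by field_simp; norm_num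
        linarith
    _ = -(η * n) * (3 * C / (8 * L * n)) * ‖G‖ := by field_simp; ring

end GradientDescent

/-- Combined per-client bound (equation pf-july15-19-0) in the proof of
Theorem B.1: core deterministic step in the convergence analysis of
DP-FedAvg with clipping. -/
theorem stmt_16 {d : ℕ} (f : EuclideanSpace ℝ (Fin d) → ℝ) (L : ℝ) (hL : 0 < L)
    (hconv : ConvexOn ℝ Set.univ f)
    (hdiff : Differentiable ℝ f)
    (hlip : ∀ x y, ‖gradient f x - gradient f y‖ ≤ L * ‖x - y‖)
    (fstar : ℝ) (hfstar : IsGLB (Set.range f) fstar)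
    (E : ℕ) (hE : 0 < E)
    (η : ℝ) (hη0 : 0 < η) (hη : η ≤ 1 / (2 * L))
    (w : ℕ → EuclideanSpace ℝ (Fin d))
    (hw : ∀ τ, w (τ + 1) = w τ - η • gradient f (w τ))
    (u : EuclideanSpace ℝ (Fin d))
    (hu : u = ∑ τ ∈ Finset.range E, gradient f (w τ))
    (wstar : EuclideanSpace ℝ (Fin d))
    (Δ : ℝ) (hΔ : Δ = f wstar - fstar)
    (Chat : ℝ) (hChat : Chat ≥ 4 * Real.sqrt (L * Δ))
    (g : EuclideanSpace ℝ (Fin d))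
    (hg : g = (min 1 (Chat * (E : ℝ) / ‖u‖)) • u)
    (A : ℝ) (hA : A = -2 * η * ⟪g, w 0 - wstar⟫ + η ^ 2 * ‖g‖ ^ 2) :
    (‖u‖ ≤ Chat * (E : ℝ) →
      A ≤ -(η * (E : ℝ)) *
        ((2 - 2 * η * L * (E : ℝ) - 4 * η ^ 2 * L ^ 2 * (E : ℝ) ^ 2)
            * (f (w 0) - f wstar)
          - (2 * η * L * (E : ℝ) + 4 * η ^ 2 * L ^ 2 * (E : ℝ) ^ 2) * Δ)) ∧
    (‖u‖ > Chat * (E : ℝ) →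
      A ≤ -(η * (E : ℝ)) * (3 * Chat / (8 * L * (E : ℝ))) * ‖u‖) := by
  have hm : ∀ z, fstar ≤ f z := fun z => hfstar.1 ⟨z, rfl⟩
  have hηL : η * L ≤ 2 := by
    have := (le_div_iff₀ (by positivity)).1 hη
    linarith
  change g = clip u (Chat * E) at hg
  subst hA hg hu hΔ
  refine ⟨fun hle => ?_, fun hgt => ?_⟩
  · rw [clip_of_norm_le hle]
    exact neg_two_mul_inner_sum_gradient_iterate_add_sq_le hL hconv hdiff hlip hm hη0.le hηL hw E
      wstar
  · exact neg_two_mul_inner_clip_sum_gradient_iterate_add_sq_le hL hconv hdiff hlip hm hη0.le hη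
      hw hE hChat hgt
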